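/- arXiv:1112.1993 — 2 statements merged into one kernel-verified Lean document; each statement's English description precedes it below -/
import Mathlib

section
/- Let X be a nonempty finite subset of ℝ^n and σ > 0, with kernel density estimator f and mean shift map m as defined. A point y ∈ ℝ^n is a fixed point of the mean shift map (m(y) = y) if and only if y is a critical point of f (∇f(y) = 0). -/
open scoped BigOperators

/-- Gaussian kernel: density of the multivariate normal distribution on `ℝ^n`
with mean `x` and covariance matrix `σ² I`. -/
noncomputable def gaussKernel (n : ℕ) (σ : ℝ) (x y : EuclideanSpace ℝ (Fin n)) : ℝ :=
  (2 * Real.pi * σ ^ 2) ^ (-(n : ℝ) / 2) * Real.exp (-‖y - x‖ ^ 2 / (2 * σ ^ 2))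

/-- Kernel density estimator `f(y) = |X|⁻¹ Σ_{x ∈ X} ψ_{x,σ}(y)`. -/
noncomputable def kde (n : ℕ) (σ : ℝ) (X : Finset (EuclideanSpace ℝ (Fin n)))
    (y : EuclideanSpace ℝ (Fin n)) : ℝ :=
  (X.card : ℝ)⁻¹ * ∑ x ∈ X, gaussKernel n σ x y

/-- Mean shift map `m(y) = (Σ_{x∈X} ψ_{x,σ}(y) x) / (Σ_{x∈X} ψ_{x,σ}(y))`. -/
noncomputable def meanShift (n : ℕ) (σ : ℝ) (X : Finset (EuclideanSpace ℝ (Fin n)))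
    (y : EuclideanSpace ℝ (Fin n)) : EuclideanSpace ℝ (Fin n) :=
  (∑ x ∈ X, gaussKernel n σ x y)⁻¹ • ∑ x ∈ X, gaussKernel n σ x y • x


/-! The gradient of `f` at `y` is `(|X| σ²)⁻¹ • Σ_x ψ_{x,σ}(y) • (x - y)`, while `m(y)` is the
centre of mass of `X` with the positive weights `ψ_{x,σ}(y)`. Hence `∇f(y) = 0` and `m(y) = y`
are both equivalent to `Σ_x ψ_{x,σ}(y) • (x - y) = 0`. -/

section Gradient

variable {F : Type*} [NormedAddCommGroup F] [InnerProductSpace ℝ F] [CompleteSpace F]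
  {f : F → ℝ} {f' y : F}

theorem HasDerivAt.comp_hasGradientAt {φ : ℝ → ℝ} {φ' : ℝ} (hφ : HasDerivAt φ φ' (f y))
    (hf : HasGradientAt f f' y) : HasGradientAt (fun z => φ (f z)) (φ' • f') y := by
  rw [hasGradientAt_iff_hasFDerivAt, map_smul]
  exact hφ.comp_hasFDerivAt y hf.hasFDerivAt

theorem HasGradientAt.const_mul (c : ℝ) (hf : HasGradientAt f f' y) :
    HasGradientAt (fun z => c * f z) (c • f') y := by
  rw [hasGradientAt_iff_hasFDerivAt, map_smul]
  exact hf.hasFDerivAt.const_mul c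

theorem HasGradientAt.fun_sum {ι : Type*} (s : Finset ι) {f : ι → F → ℝ} {f' : ι → F}
    (h : ∀ i ∈ s, HasGradientAt (f i) (f' i) y) :
    HasGradientAt (fun z => ∑ i ∈ s, f i z) (∑ i ∈ s, f' i) y := by
  rw [hasGradientAt_iff_hasFDerivAt, map_sum]
  exact HasFDerivAt.fun_sum fun i hi => (h i hi).hasFDerivAt

theorem hasGradientAt_norm_sub_sq (x y : F) :
    HasGradientAt (fun z => ‖z - x‖ ^ 2) ((2 : ℝ) • (y - x)) y := by
  rw [hasGradientAt_iff_hasFDerivAt]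
  exact ((hasFDerivAt_id y).sub_const x).norm_sq.congr_fderiv (by ext; simp)

end Gradient

theorem Finset.centerMass_eq_iff_sum_smul_sub_eq_zero {R E ι : Type*} [Field R] [AddCommGroup E]
    [Module R E] {t : Finset ι} {w : ι → R} {z : ι → E} {p : E} (hw : ∑ i ∈ t, w i ≠ 0) :
    t.centerMass w z = p ↔ ∑ i ∈ t, w i • (z i - p) = 0 := by
  rw [centerMass, inv_smul_eq_iff₀ hw, ← sub_eq_zero]
  simp only [smul_sub, sum_sub_distrib, sum_smul]

theorem gaussKernel_pos (n : ℕ) {σ : ℝ} (hσ : σ ≠ 0) (x y : EuclideanSpace ℝ (Fin n)) :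
    0 < gaussKernel n σ x y := by
  unfold gaussKernel
  positivity

theorem hasGradientAt_gaussKernel (n : ℕ) (σ : ℝ) (x y : EuclideanSpace ℝ (Fin n)) :
    HasGradientAt (gaussKernel n σ x) ((gaussKernel n σ x y / σ ^ 2) • (x - y)) y := by
  have hexp : HasDerivAt (fun t : ℝ => Real.exp (-t / (2 * σ ^ 2)))
      (Real.exp (-‖y - x‖ ^ 2 / (2 * σ ^ 2)) * (-1 / (2 * σ ^ 2))) (‖y - x‖ ^ 2) :=
    ((hasDerivAt_id _).neg.div_const _).exp
  have h := (hexp.comp_hasGradientAt (f := fun z => ‖z - x‖ ^ 2)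
    (hasGradientAt_norm_sub_sq x y)).const_mul ((2 * Real.pi * σ ^ 2) ^ (-(n : ℝ) / 2))
  convert h using 1
  · rfl
  rw [gaussKernel, smul_smul, smul_smul, ← neg_sub x y, smul_neg, ← neg_smul]
  congr 1
  field_simp

theorem hasGradientAt_kde (n : ℕ) (σ : ℝ) (X : Finset (EuclideanSpace ℝ (Fin n)))
    (y : EuclideanSpace ℝ (Fin n)) :
    HasGradientAt (kde n σ X)
      ((X.card * σ ^ 2 : ℝ)⁻¹ • ∑ x ∈ X, gaussKernel n σ x y • (x - y)) y := by
  convert ((HasGradientAt.fun_sum X fun x _ => hasGradientAt_gaussKernel n σ x y).const_mul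
    (X.card : ℝ)⁻¹) using 1
  · rfl
  simp only [Finset.smul_sum, smul_smul]
  congr! 2 with x
  field_simp

/-- `y` is a fixed point of the mean shift map iff `y` is a critical point of the
kernel density estimator `f`. -/
theorem meanShift_fixedPoint_iff_critical (n : ℕ) (X : Finset (EuclideanSpace ℝ (Fin n)))
    (hX : X.Nonempty) (σ : ℝ) (hσ : 0 < σ) (y : EuclideanSpace ℝ (Fin n)) :
    meanShift n σ X y = y ↔ gradient (kde n σ X) y = 0 := by
  have hψ : ∑ x ∈ X, gaussKernel n σ x y ≠ 0 :=
    (Finset.sum_pos (fun x _ => gaussKernel_pos n hσ.ne' x y) hX).ne'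
  have hcard : (X.card * σ ^ 2 : ℝ)⁻¹ ≠ 0 := by
    have := hX.card_pos
    positivity
  change X.centerMass (fun x => gaussKernel n σ x y) id = y ↔ _
  rw [Finset.centerMass_eq_iff_sum_smul_sub_eq_zero hψ, (hasGradientAt_kde n σ X y).gradient,
    smul_eq_zero, or_iff_right hcard]
  rfl
end

section
/- Let X be a nonempty finite subset of ℝ^n and σ > 0, with kernel density estimator f and mean shift map m as defined. For any starting point y_0 ∈ ℝ^n, define the mean shift iterates y_{i+1} = m(y_i). Then the sequence of densities f(y_0), f(y_1), f(y_2), … is nondecreasing, bounded above by (2πσ²)^{−n/2}, and hence converges. -/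
/-!
Since `exp t ≥ 1 + t`, for every `x` we have
`ψ_x(z) - ψ_x(y) ≥ ψ_x(y) (‖y - x‖² - ‖z - x‖²) / (2σ²)`. Summing over `X`, `f(z) - f(y)` is
bounded below by a nonnegative multiple of `Σ ψ_x(y) ‖y - x‖² - Σ ψ_x(y) ‖z - x‖²`, and for
`z = m(y)`, the `ψ_·(y)`-weighted mean of `X`, this is nonnegative because a weighted mean
minimizes the weighted sum of squared distances. Each kernel is bounded by its peak value
`(2πσ²)^(-n/2)`, so the densities form a bounded monotone sequence.
-/

open scoped BigOperators

open Finset Real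

open scoped RealInnerProductSpace

section CenterMass

variable {ι E : Type*} [NormedAddCommGroup E] [InnerProductSpace ℝ E]
  {t : Finset ι} {w : ι → ℝ} {p : ι → E}

lemma Finset.sum_smul_centerMass_sub (hw : ∑ i ∈ t, w i ≠ 0) :
    ∑ i ∈ t, w i • (t.centerMass w p - p i) = 0 := by
  simp_rw [smul_sub]
  rw [sum_sub_distrib, ← sum_smul, centerMass, smul_inv_smul₀ hw, sub_self]

lemma Finset.sum_mul_norm_sub_sq_eq (hw : ∑ i ∈ t, w i ≠ 0) (z : E) :
    ∑ i ∈ t, w i * ‖z - p i‖ ^ 2 =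
      (∑ i ∈ t, w i) * ‖z - t.centerMass w p‖ ^ 2
        + ∑ i ∈ t, w i * ‖t.centerMass w p - p i‖ ^ 2 := by
  set μ := t.centerMass w p
  have hcross : ∑ i ∈ t, w i * ⟪z - μ, μ - p i⟫ = 0 := by
    simp_rw [← real_inner_smul_right]
    rw [← inner_sum, sum_smul_centerMass_sub hw, inner_zero_right]
  calc ∑ i ∈ t, w i * ‖z - p i‖ ^ 2
      = ∑ i ∈ t, (w i * ‖z - μ‖ ^ 2 + 2 * (w i * ⟪z - μ, μ - p i⟫) + w i * ‖μ - p i‖ ^ 2) := by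
        refine sum_congr rfl fun i _ => ?_
        rw [← sub_add_sub_cancel z μ (p i), norm_add_sq_real]
        ring
    _ = _ := by
        rw [sum_add_distrib, sum_add_distrib, ← mul_sum, hcross, ← sum_mul]
        ring

lemma Finset.sum_mul_norm_centerMass_sub_sq_le (hw : ∀ i ∈ t, 0 ≤ w i) (z : E) :
    ∑ i ∈ t, w i * ‖t.centerMass w p - p i‖ ^ 2 ≤ ∑ i ∈ t, w i * ‖z - p i‖ ^ 2 := by
  by_cases hS : ∑ i ∈ t, w i = 0
  · have hzero := (sum_eq_zero_iff_of_nonneg hw).1 hS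
    rw [sum_eq_zero fun i hi => by rw [hzero i hi, zero_mul]]
    exact sum_nonneg fun i _ => mul_nonneg (hw i ‹_›) (sq_nonneg _)
  · rw [sum_mul_norm_sub_sq_eq hS z]
    have := mul_nonneg (sum_nonneg hw) (sq_nonneg ‖z - t.centerMass w p‖)
    linarith

end CenterMass

section MeanShift

variable (n : ℕ) (σ : ℝ) (X : Finset (EuclideanSpace ℝ (Fin n)))
  (x y z : EuclideanSpace ℝ (Fin n))

lemma gaussKernel_nonneg : 0 ≤ gaussKernel n σ x y := by
  unfold gaussKernel
  positivity

lemma gaussKernel_le : gaussKernel n σ x y ≤ (2 * π * σ ^ 2) ^ (-(n : ℝ) / 2) := by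
  unfold gaussKernel
  refine mul_le_of_le_one_right (by positivity) (exp_le_one_iff.2 ?_)
  exact div_nonpos_of_nonpos_of_nonneg (neg_nonpos.2 (by positivity)) (by positivity)

lemma gaussKernel_eq_mul_exp :
    gaussKernel n σ x z =
      gaussKernel n σ x y * exp ((‖y - x‖ ^ 2 - ‖z - x‖ ^ 2) / (2 * σ ^ 2)) := by
  rw [gaussKernel, gaussKernel, mul_assoc _ (rexp _), ← exp_add]
  congr 2
  ring

lemma gaussKernel_mul_le_sub :
    gaussKernel n σ x y * ((‖y - x‖ ^ 2 - ‖z - x‖ ^ 2) / (2 * σ ^ 2))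
      ≤ gaussKernel n σ x z - gaussKernel n σ x y := by
  rw [gaussKernel_eq_mul_exp n σ x y z]
  have := mul_le_mul_of_nonneg_left (add_one_le_exp ((‖y - x‖ ^ 2 - ‖z - x‖ ^ 2) / (2 * σ ^ 2)))
    (gaussKernel_nonneg n σ x y)
  linarith

lemma meanShift_eq_centerMass :
    meanShift n σ X y = X.centerMass (fun x => gaussKernel n σ x y) id :=
  rfl

lemma kde_le_kde_meanShift : kde n σ X y ≤ kde n σ X (meanShift n σ X y) := by
  set w := fun x => gaussKernel n σ x y
  set z := meanShift n σ X y
  have hmin : ∑ x ∈ X, w x * ‖z - x‖ ^ 2 ≤ ∑ x ∈ X, w x * ‖y - x‖ ^ 2 := by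
    rw [show z = X.centerMass w id from meanShift_eq_centerMass n σ X y]
    exact sum_mul_norm_centerMass_sub_sq_le (fun x _ => gaussKernel_nonneg n σ x y) y
  have hgain : 0 ≤ ∑ x ∈ X, (gaussKernel n σ x z - gaussKernel n σ x y) := calc
    0 ≤ (∑ x ∈ X, w x * ‖y - x‖ ^ 2 - ∑ x ∈ X, w x * ‖z - x‖ ^ 2) / (2 * σ ^ 2) :=
        div_nonneg (sub_nonneg.2 hmin) (by positivity)
    _ = ∑ x ∈ X, w x * ((‖y - x‖ ^ 2 - ‖z - x‖ ^ 2) / (2 * σ ^ 2)) := by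
        rw [← sum_sub_distrib, sum_div]
        exact sum_congr rfl fun x _ => by ring
    _ ≤ _ := sum_le_sum fun x _ => gaussKernel_mul_le_sub n σ x y z
  rw [sum_sub_distrib, sub_nonneg] at hgain
  exact mul_le_mul_of_nonneg_left hgain (by positivity)

lemma kde_le : kde n σ X y ≤ (2 * π * σ ^ 2) ^ (-(n : ℝ) / 2) := by
  rcases X.eq_empty_or_nonempty with rfl | hX
  · simp only [kde, card_empty, sum_empty, mul_zero]
    positivity
  · rw [kde, inv_mul_le_iff₀ (by exact_mod_cast hX.card_pos)]
    simpa using sum_le_card_nsmul X _ _ fun x _ => gaussKernel_le n σ x y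

end MeanShift

theorem kde_meanShift_iterates_converge_general (n : ℕ) (X : Finset (EuclideanSpace ℝ (Fin n)))
    (σ : ℝ)
    (y : ℕ → EuclideanSpace ℝ (Fin n)) (hy : ∀ i, y (i + 1) = meanShift n σ X (y i)) :
    Monotone (fun i => kde n σ X (y i)) ∧
    (∀ i, kde n σ X (y i) ≤ (2 * Real.pi * σ ^ 2) ^ (-(n : ℝ) / 2)) ∧
    ∃ L : ℝ, Filter.Tendsto (fun i => kde n σ X (y i)) Filter.atTop (nhds L) := by
  have hmono : Monotone fun i => kde n σ X (y i) :=
    monotone_nat_of_le_succ fun i => hy i ▸ kde_le_kde_meanShift n σ X (y i)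
  have hbdd : ∀ i, kde n σ X (y i) ≤ (2 * π * σ ^ 2) ^ (-(n : ℝ) / 2) :=
    fun i => kde_le n σ X (y i)
  exact ⟨hmono, hbdd, _, tendsto_atTop_ciSup hmono ⟨_, Set.forall_mem_range.2 hbdd⟩⟩

/-- Along the mean shift iterates `y_{i+1} = m(y_i)`, the densities `f(y_i)` form a
nondecreasing sequence, bounded above by `(2πσ²)^(−n/2)`, and hence convergent. -/
theorem kde_meanShift_iterates_converge (n : ℕ) (X : Finset (EuclideanSpace ℝ (Fin n)))
    (hX : X.Nonempty) (σ : ℝ) (hσ : 0 < σ)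
    (y : ℕ → EuclideanSpace ℝ (Fin n)) (hy : ∀ i, y (i + 1) = meanShift n σ X (y i)) :
    Monotone (fun i => kde n σ X (y i)) ∧
    (∀ i, kde n σ X (y i) ≤ (2 * Real.pi * σ ^ 2) ^ (-(n : ℝ) / 2)) ∧
    ∃ L : ℝ, Filter.Tendsto (fun i => kde n σ X (y i)) Filter.atTop (nhds L) :=
  kde_meanShift_iterates_converge_general n X σ y hy
end
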